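/- Let u : [0, t₀) → ℝ be differentiable, u(0) = 1, and suppose u satisfies the differential inequality (d/dt) u(t)^p ≤ K u(t) with u > 0, where p = (n+2)/(n-2) and K = sup|R₀| · a for constants a = (n-2)/(4(n-1)), n ≥ 3. Then u(t) ≤ (1 + ((n-2)/((n-1)(n+2))) · sup|R₀| · t)^{(n-2)/4} for all t ∈ [0, t₀). -/

import Mathlib

/-!
With `q = (p - 1) / p`, the function `(u ^ p) ^ q = u ^ (p - 1)` has derivative
`q · (u ^ p)' / u ≤ q · A`, because `p (q - 1) = -1`. By the mean value inequality
`u ^ (p - 1)` grows at most linearly, `u t ^ (p - 1) ≤ 1 + q A t`, and taking the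
`1 / (p - 1)`-th power gives the barrier. For the Yamabe flow `p - 1 = 4 / (n - 2)`.
-/

open Set Real

lemma hasDerivAt_rpow_rpow_sub_one_div {u : ℝ → ℝ} {p d t : ℝ} (hp : p ≠ 0) (hu : 0 < u t)
    (hd : HasDerivAt (fun s => u s ^ p) d t) :
    HasDerivAt (fun s => (u s ^ p) ^ ((p - 1) / p)) ((p - 1) / p * d / u t) t := by
  convert hd.rpow_const (p := (p - 1) / p) (Or.inl (rpow_pos_of_pos hu p).ne') using 1
  have hexp : p * ((p - 1) / p - 1) = -1 := by field_simp; ring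
  rw [← rpow_mul hu.le, hexp, rpow_neg_one]
  ring

theorem le_rpow_of_hasDerivAt_rpow_le_mul {u D : ℝ → ℝ} {p A T : ℝ} (hp : 1 < p)
    (hpos : ∀ t ∈ Ico 0 T, 0 < u t) (hu0 : u 0 = 1)
    (hderiv : ∀ t ∈ Ico 0 T, HasDerivAt (fun s => u s ^ p) (D t) t)
    (hineq : ∀ t ∈ Ico 0 T, D t ≤ A * u t) :
    ∀ t ∈ Ico 0 T, u t ≤ (1 + A * (p - 1) / p * t) ^ (1 / (p - 1)) := by
  have hp0 : p ≠ 0 := by positivity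
  set z : ℝ → ℝ := fun s => (u s ^ p) ^ ((p - 1) / p)
  have hz : ∀ t ∈ Ico 0 T, HasDerivAt z ((p - 1) / p * D t / u t) t := fun t ht =>
    hasDerivAt_rpow_rpow_sub_one_div hp0 (hpos t ht) (hderiv t ht)
  have hz_le : ∀ t ∈ Ico 0 T, (p - 1) / p * D t / u t ≤ A * (p - 1) / p := by
    intro t ht
    have hq : 0 ≤ (p - 1) / p := div_nonneg (by linarith) (by linarith)
    rw [div_le_iff₀ (hpos t ht)]
    calc (p - 1) / p * D t ≤ (p - 1) / p * (A * u t) := mul_le_mul_of_nonneg_left (hineq t ht) hq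
      _ = A * (p - 1) / p * u t := by ring
  intro t ht
  have h0 : (0 : ℝ) ∈ Ico 0 T := ⟨le_rfl, ht.1.trans_lt ht.2⟩
  have hgrowth : z t - z 0 ≤ A * (p - 1) / p * (t - 0) :=
    (convex_Ico 0 T).image_sub_le_mul_sub_of_deriv_le
      (fun s hs => (hz s hs).continuousAt.continuousWithinAt)
      (fun s hs => (hz s (interior_subset hs)).differentiableAt.differentiableWithinAt)
      (fun s hs => (hz s (interior_subset hs)).deriv ▸ hz_le s (interior_subset hs))
      0 h0 t ht ht.1
  have hz0 : z 0 = 1 := by simp [z, hu0]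
  have hzt : z t = u t ^ (p - 1) := by
    simp only [z]
    rw [← rpow_mul (hpos t ht).le, mul_div_cancel₀ _ hp0]
  have hsub : p - 1 ≠ 0 := by linarith
  calc u t = (u t ^ (p - 1)) ^ (1 / (p - 1)) := by
        rw [← rpow_mul (hpos t ht).le, mul_one_div_cancel hsub, rpow_one]
    _ ≤ _ := rpow_le_rpow (by positivity [hpos t ht]) (by linarith) (by positivity)

theorem stmt_5_general (n : ℕ) (hn : 3 ≤ n) (K t₀ : ℝ)
    (u D : ℝ → ℝ)
    (hpos : ∀ t ∈ Set.Ico (0:ℝ) t₀, 0 < u t)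
    (hu0 : u 0 = 1)
    (hderiv : ∀ t ∈ Set.Ico (0:ℝ) t₀,
      HasDerivAt (fun s => u s ^ (((n:ℝ) + 2) / ((n:ℝ) - 2))) (D t) t)
    (hineq : ∀ t ∈ Set.Ico (0:ℝ) t₀,
      D t ≤ (((n:ℝ) - 2) / (4 * ((n:ℝ) - 1))) * K * u t) :
    ∀ t ∈ Set.Ico (0:ℝ) t₀,
      u t ≤ (1 + (((n:ℝ) - 2) / (((n:ℝ) - 1) * ((n:ℝ) + 2))) * K * t) ^ (((n:ℝ) - 2) / 4) := by
  have hN : (3 : ℝ) ≤ n := by exact_mod_cast hn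
  have h2 : (n : ℝ) - 2 ≠ 0 := by linarith
  have h1 : (n : ℝ) - 1 ≠ 0 := by linarith
  have hp : 1 < ((n : ℝ) + 2) / ((n : ℝ) - 2) := by
    rw [one_lt_div (by linarith)]; linarith
  have hexp : 1 / (((n : ℝ) + 2) / ((n : ℝ) - 2) - 1) = ((n : ℝ) - 2) / 4 := by
    field_simp; ring
  have hcoef : ((n : ℝ) - 2) / (4 * ((n : ℝ) - 1)) * K * (((n : ℝ) + 2) / ((n : ℝ) - 2) - 1) /
      (((n : ℝ) + 2) / ((n : ℝ) - 2)) = ((n : ℝ) - 2) / (((n : ℝ) - 1) * ((n : ℝ) + 2)) * K := by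
    have : (n : ℝ) + 2 ≠ 0 := by linarith
    field_simp; ring
  intro t ht
  have key := le_rpow_of_hasDerivAt_rpow_le_mul hp hpos hu0 hderiv hineq t ht
  rwa [hexp, hcoef] at key

/-- Upper barrier for the Yamabe flow conformal factor: if `u(0)=1`, `u>0` and
`d/dt(u^p) ≤ a·K·u` with `p=(n+2)/(n-2)`, `a=(n-2)/(4(n-1))`, then
`u(t) ≤ (1 + ((n-2)/((n-1)(n+2))) K t)^{(n-2)/4}`. -/
theorem stmt_5 (n : ℕ) (hn : 3 ≤ n) (K t₀ : ℝ) (hK : 0 ≤ K) (ht₀ : 0 < t₀)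
    (u D : ℝ → ℝ)
    (hpos : ∀ t ∈ Set.Ico (0:ℝ) t₀, 0 < u t)
    (hu0 : u 0 = 1)
    (hderiv : ∀ t ∈ Set.Ico (0:ℝ) t₀,
      HasDerivAt (fun s => u s ^ (((n:ℝ) + 2) / ((n:ℝ) - 2))) (D t) t)
    (hineq : ∀ t ∈ Set.Ico (0:ℝ) t₀,
      D t ≤ (((n:ℝ) - 2) / (4 * ((n:ℝ) - 1))) * K * u t) :
    ∀ t ∈ Set.Ico (0:ℝ) t₀,
      u t ≤ (1 + (((n:ℝ) - 2) / (((n:ℝ) - 1) * ((n:ℝ) + 2))) * K * t) ^ (((n:ℝ) - 2) / 4) :=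
  stmt_5_general n hn K t₀ u D hpos hu0 hderiv hineq
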